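/- arXiv:1908.06174 — 5 statements merged into one kernel-verified Lean document; each statement's English description precedes it below -/
import Mathlib

section
/- Let k be a field of characteristic 2 and let \mathcal{H} be the k-algebra generated by two elements T, S subject to the relations T^2 = 1 and (S+1)S = 0. Let M_1 be the right \mathcal{H}-module with basis v satisfying vT = v, vS = 0, and let M_{Ind} be the 2-dimensional right \mathcal{H}-module with basis v_1, v_2 satisfying v_1 T = v_1, v_2 T = v_2, v_1 S = 0, v_2 S = v_1 + v_2. Then Ext^1_{\mathcal{H}}(M_{Ind}, M_1) \neq 0. -/
/-- The defining relations `T² = 1` and `(S+1)S = 0` of the (fixed determinant) pro-`2`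
Iwahori Hecke algebra of `GL₂(ℚ₂)`; the generator `T` is `FreeAlgebra.ι k true` and the
generator `S` is `FreeAlgebra.ι k false`. -/
inductive HeckeRel (k : Type) [Field k] : FreeAlgebra k Bool → FreeAlgebra k Bool → Prop
  | Tsq : HeckeRel k (FreeAlgebra.ι k true * FreeAlgebra.ι k true) 1
  | Ssq : HeckeRel k ((FreeAlgebra.ι k false + 1) * FreeAlgebra.ι k false) 0

/-- The `k`-algebra `ℋ = k⟨T,S⟩/(T² - 1, S² + S)`. -/
abbrev Hecke (k : Type) [Field k] : Type := RingQuot (HeckeRel k)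

/-- The generator `T` of `ℋ`. -/
noncomputable def HeckeT (k : Type) [Field k] : Hecke k :=
  RingQuot.mkAlgHom k (HeckeRel k) (FreeAlgebra.ι k true)

/-- The generator `S` of `ℋ`. -/
noncomputable def HeckeS (k : Type) [Field k] : Hecke k :=
  RingQuot.mkAlgHom k (HeckeRel k) (FreeAlgebra.ι k false)

/-!
`ℋ` is presented by one relation in `T` alone and one in `S` alone, so any pair of
endomorphisms satisfying them defines an `ℋ`-module. Let `T` act trivially on `M` and `N`,
and fix a nonzero `k`-linear `δ : N → M`. On `M × N` let `T` act by `(m, n) ↦ (m + δ n, n)`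
and `S` diagonally; then `T² = 1` because `2δ = 0` in characteristic `2`, and `M × N` is an
extension of `N` by `M`. A retraction `r` onto `M` would commute with `T`, which is trivial
on `M`, so `δ n = r (T • (0, n)) - r (0, n) = 0`. For `M₁`, `M_Ind` and `δ v₁ = v` this is
the three-dimensional module with basis `v, v₁, v₂`.
-/

namespace Hecke

variable {k : Type} [Field k]

noncomputable def lift {A : Type} [Ring A] [Algebra k A] (t s : A)
    (ht : t * t = 1) (hs : (s + 1) * s = 0) : Hecke k →ₐ[k] A :=
  RingQuot.liftAlgHom k ⟨FreeAlgebra.lift k fun b => bif b then t else s, by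
    rintro x y (_ | _) <;> simp [ht, hs]⟩

section Lift

variable {A : Type} [Ring A] [Algebra k A] (t s : A) (ht : t * t = 1) (hs : (s + 1) * s = 0)

@[simp] theorem lift_T : lift t s ht hs (HeckeT k) = t := by
  simp [lift, HeckeT, RingQuot.liftAlgHom_mkAlgHom_apply]

@[simp] theorem lift_S : lift t s ht hs (HeckeS k) = s := by
  simp [lift, HeckeS, RingQuot.liftAlgHom_mkAlgHom_apply]

end Lift

theorem HeckeS_add_one_mul_HeckeS : (HeckeS k + 1) * HeckeS k = 0 := by
  rw [HeckeS, ← map_one (RingQuot.mkAlgHom k (HeckeRel k)), ← map_add, ← map_mul]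
  exact (RingQuot.mkAlgHom_rel k HeckeRel.Ssq).trans (map_zero _)

@[elab_as_elim]
theorem induction_on {P : Hecke k → Prop} (h : Hecke k)
    (algebraMap : ∀ r : k, P (algebraMap k (Hecke k) r))
    (T : P (HeckeT k)) (S : P (HeckeS k))
    (mul : ∀ x y, P x → P y → P (x * y)) (add : ∀ x y, P x → P y → P (x + y)) : P h := by
  obtain ⟨x, rfl⟩ := RingQuot.mkAlgHom_surjective k (HeckeRel k) h
  induction x with
  | grade0 r => rw [AlgHom.commutes]; exact algebraMap r
  | grade1 b => cases b
                · exact S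
                · exact T
  | mul a b ha hb => rw [map_mul]; exact mul _ _ ha hb
  | add a b ha hb => rw [map_add]; exact add _ _ ha hb

section LinearMaps

variable {M N : Type} [AddCommGroup M] [Module (Hecke k) M] [Module k M]
  [IsScalarTower k (Hecke k) M] [AddCommGroup N] [Module (Hecke k) N] [Module k N]
  [IsScalarTower k (Hecke k) N]

theorem map_smul_of_commute (φ : M →ₗ[k] N)
    (hT : ∀ x, φ (HeckeT k • x) = HeckeT k • φ x) (hS : ∀ x, φ (HeckeS k • x) = HeckeS k • φ x)
    (h : Hecke k) (x : M) : φ (h • x) = h • φ x := by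
  induction h using Hecke.induction_on generalizing x with
  | algebraMap r => simp only [algebraMap_smul, map_smul]
  | T => exact hT x
  | S => exact hS x
  | mul a b ha hb => rw [mul_smul, mul_smul, ha, hb]
  | add a b ha hb => rw [add_smul, add_smul, map_add, ha, hb]

noncomputable def linearMapOfCommute (φ : M →ₗ[k] N)
    (hT : ∀ x, φ (HeckeT k • x) = HeckeT k • φ x) (hS : ∀ x, φ (HeckeS k • x) = HeckeS k • φ x) :
    M →ₗ[Hecke k] N where
  toFun := φ
  map_add' := φ.map_add
  map_smul' := map_smul_of_commute φ hT hS

end LinearMaps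

section TwistedExtension

variable {M N : Type} [AddCommGroup M] [Module k M] [AddCommGroup N] [Module k N]

def twist (δ : N →ₗ[k] M) : Module.End k (M × N) :=
  LinearMap.inl k M N ∘ₗ δ ∘ₗ LinearMap.snd k M N

theorem twist_mul_twist (δ : N →ₗ[k] M) : twist δ * twist δ = 0 := by
  ext x <;> simp [twist]

theorem one_add_twist_mul_self [CharP k 2] (δ : N →ₗ[k] M) :
    (1 + twist δ) * (1 + twist δ) = 1 := by
  have h2 : twist δ + twist δ = 0 := by
    rw [← two_smul k, CharTwo.two_eq_zero, zero_smul]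
  rw [add_mul, mul_add, mul_add, twist_mul_twist, one_mul, one_mul, mul_one, add_zero, add_assoc,
    h2, add_zero]

-- `δ` only selects the `ℋ`-module structure; the underlying group is `M × N`.
def TwistedExt (_δ : N →ₗ[k] M) : Type := M × N

namespace TwistedExt

variable (δ : N →ₗ[k] M)

instance : AddCommGroup (TwistedExt δ) := inferInstanceAs (AddCommGroup (M × N))

instance : Module k (TwistedExt δ) := inferInstanceAs (Module k (M × N))

def mk (m : M) (n : N) : TwistedExt δ := (m, n)

theorem mk_add_mk (m m' : M) (n n' : N) : mk δ m n + mk δ m' n' = mk δ (m + m') (n + n') := rfl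

end TwistedExt

variable [CharP k 2] [Module (Hecke k) M] [IsScalarTower k (Hecke k) M] [Module (Hecke k) N]
  [IsScalarTower k (Hecke k) N]

noncomputable def twistedRep (δ : N →ₗ[k] M) : Hecke k →ₐ[k] Module.End k (M × N) :=
  lift (1 + twist δ) (Algebra.lsmul (A := Hecke k) k k (M × N) (HeckeS k))
    (one_add_twist_mul_self δ) <| by
    rw [← map_one (Algebra.lsmul (A := Hecke k) k k (M × N)), ← map_add, ← map_mul,
      HeckeS_add_one_mul_HeckeS, map_zero]

namespace TwistedExt

variable (δ : N →ₗ[k] M)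

noncomputable instance : Module (Hecke k) (TwistedExt δ) :=
  Module.compHom (M × N) (twistedRep δ : Hecke k →+* Module.End k (M × N))

theorem smul_def (h : Hecke k) (x : TwistedExt δ) : h • x = twistedRep δ h x := rfl

instance : IsScalarTower k (Hecke k) (TwistedExt δ) where
  smul_assoc c h x := by simp only [smul_def, map_smul]; rfl

theorem HeckeT_smul_mk (m : M) (n : N) : HeckeT k • mk δ m n = mk δ (m + δ n) n := by
  show twistedRep δ (HeckeT k) (m, n) = (m + δ n, n)
  simp [twistedRep, twist]

theorem HeckeS_smul_mk (m : M) (n : N) :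
    HeckeS k • mk δ m n = mk δ (HeckeS k • m) (HeckeS k • n) := by
  show twistedRep δ (HeckeS k) (m, n) = (HeckeS k • m, HeckeS k • n)
  simp [twistedRep]

variable {δ} (hM : ∀ m : M, HeckeT k • m = m) (hN : ∀ n : N, HeckeT k • n = n)

noncomputable def inl : M →ₗ[Hecke k] TwistedExt δ :=
  linearMapOfCommute (show M →ₗ[k] TwistedExt δ from LinearMap.inl k M N)
    (fun m => by
      change mk δ (HeckeT k • m) 0 = HeckeT k • mk δ m 0
      rw [HeckeT_smul_mk, map_zero, add_zero, hM])
    (fun m => by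
      change mk δ (HeckeS k • m) 0 = HeckeS k • mk δ m 0
      rw [HeckeS_smul_mk, smul_zero])

noncomputable def snd : TwistedExt δ →ₗ[Hecke k] N :=
  linearMapOfCommute (show TwistedExt δ →ₗ[k] N from LinearMap.snd k M N)
    (fun ⟨m, n⟩ => by
      change LinearMap.snd k M N (HeckeT k • mk δ m n) = HeckeT k • n
      rw [HeckeT_smul_mk, hN]
      rfl)
    (fun ⟨m, n⟩ => by
      change LinearMap.snd k M N (HeckeS k • mk δ m n) = HeckeS k • n
      rw [HeckeS_smul_mk]
      rfl)

theorem inl_apply (m : M) : inl hM m = mk δ m 0 := rfl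

theorem inl_injective : Function.Injective (inl (δ := δ) hM) :=
  LinearMap.inl_injective

theorem snd_surjective : Function.Surjective (snd (δ := δ) hN) :=
  fun n => ⟨mk δ 0 n, rfl⟩

theorem range_inl_eq_ker_snd : LinearMap.range (inl (δ := δ) hM) = LinearMap.ker (snd hN) := by
  ext ⟨m, n⟩
  change (∃ m', (m', (0 : N)) = (m, n)) ↔ n = 0
  simp [eq_comm]

theorem not_exists_retraction (hδ : δ ≠ 0) :
    ¬∃ r : TwistedExt δ →ₗ[Hecke k] M, r.comp (inl hM) = LinearMap.id := by
  rintro ⟨r, hr⟩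
  refine hδ (LinearMap.ext fun n => ?_)
  have hfix : r (HeckeT k • mk δ 0 n) = r (mk δ 0 n) := by rw [map_smul, hM]
  have hsplit : HeckeT k • mk δ 0 n = inl hM (δ n) + mk δ 0 n := by
    simp only [HeckeT_smul_mk, inl_apply, mk_add_mk, zero_add, add_zero]
  rw [hsplit, map_add, ← LinearMap.comp_apply, hr, LinearMap.id_apply, add_eq_right] at hfix
  exact hfix

end TwistedExt

theorem exists_nonsplit_extension_of_HeckeT_smul_eq_self [Nontrivial M] [Nontrivial N]
    (hM : ∀ m : M, HeckeT k • m = m) (hN : ∀ n : N, HeckeT k • n = n) :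
    ∃ (E : Type) (_ : AddCommGroup E) (_ : Module (Hecke k) E)
      (f : M →ₗ[Hecke k] E) (g : E →ₗ[Hecke k] N),
      Function.Injective f ∧ Function.Surjective g ∧
      LinearMap.range f = LinearMap.ker g ∧
      ¬∃ r : E →ₗ[Hecke k] M, r.comp f = LinearMap.id := by
  obtain ⟨m, hm⟩ := exists_ne (0 : M)
  obtain ⟨n, hn⟩ := exists_ne (0 : N)
  obtain ⟨φ, hφ⟩ := Module.Projective.exists_dual_ne_zero k hn
  have hδ : φ.smulRight m ≠ 0 := fun h => smul_ne_zero hφ hm (LinearMap.congr_fun h n)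
  exact ⟨TwistedExt (φ.smulRight m), inferInstance, inferInstance, TwistedExt.inl hM,
    TwistedExt.snd hN, TwistedExt.inl_injective hM, TwistedExt.snd_surjective hN,
    TwistedExt.range_inl_eq_ker_snd hM hN, TwistedExt.not_exists_retraction hM hδ⟩

end TwistedExtension

end Hecke

theorem stmt_7_general (k : Type) [Field k] [CharP k 2]
    (M1 : Type) [AddCommGroup M1] [Module (Hecke k) M1] [Module k M1]
    [IsScalarTower k (Hecke k) M1]
    (v : M1) (hv : ∀ m : M1, ∃! c : k, m = c • v)
    (hvT : HeckeT k • v = v)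
    (MInd : Type) [AddCommGroup MInd] [Module (Hecke k) MInd] [Module k MInd]
    [IsScalarTower k (Hecke k) MInd]
    (v₁ v₂ : MInd) (hbasis : ∀ m : MInd, ∃! c : k × k, m = c.1 • v₁ + c.2 • v₂)
    (h1T : HeckeT k • v₁ = v₁) (h2T : HeckeT k • v₂ = v₂) :
    ∃ (E : Type) (_ : AddCommGroup E) (_ : Module (Hecke k) E)
      (f : M1 →ₗ[Hecke k] E) (g : E →ₗ[Hecke k] MInd),
      Function.Injective f ∧ Function.Surjective g ∧
      LinearMap.range f = LinearMap.ker g ∧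
      ¬∃ r : E →ₗ[Hecke k] M1, r.comp f = LinearMap.id := by
  have : Nontrivial M1 := by
    refine nontrivial_of_ne v 0 fun h => one_ne_zero ((hv v).unique ?_ ?_ : (1 : k) = 0)
    · rw [one_smul]
    · rw [h, smul_zero]
  have : Nontrivial MInd := by
    refine nontrivial_of_ne v₁ 0 fun h => one_ne_zero
      (congrArg Prod.fst ((hbasis v₁).unique ?_ ?_ : ((1 : k), (0 : k)) = (0, 0)))
    · simp
    · simp [h]
  refine Hecke.exists_nonsplit_extension_of_HeckeT_smul_eq_self (fun m => ?_) (fun m => ?_)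
  · obtain ⟨c, rfl, -⟩ := hv m
    rw [smul_comm, hvT]
  · obtain ⟨c, rfl, -⟩ := hbasis m
    rw [smul_add, smul_comm, h1T, smul_comm, h2T]

/-- Let `k` be a field of characteristic `2` and `ℋ = k⟨T,S⟩/(T² - 1, S² + S)`.  Let `M₁` be
the (right) `ℋ`-module with basis `v` satisfying `vT = v`, `vS = 0`, and let `M_{Ind}` be
the `2`-dimensional `ℋ`-module with basis `v₁, v₂` satisfying `v₁T = v₁`, `v₂T = v₂`,
`v₁S = 0`, `v₂S = v₁ + v₂`.  Then `Ext¹_ℋ(M_{Ind}, M₁) ≠ 0`, i.e. there exists a non-split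
extension of `M_{Ind}` by `M₁`. -/
theorem stmt_7 (k : Type) [Field k] [CharP k 2]
    (M1 : Type) [AddCommGroup M1] [Module (Hecke k) M1] [Module k M1]
    [IsScalarTower k (Hecke k) M1]
    (v : M1) (hv : ∀ m : M1, ∃! c : k, m = c • v)
    (hvT : HeckeT k • v = v) (hvS : HeckeS k • v = 0)
    (MInd : Type) [AddCommGroup MInd] [Module (Hecke k) MInd] [Module k MInd]
    [IsScalarTower k (Hecke k) MInd]
    (v₁ v₂ : MInd) (hbasis : ∀ m : MInd, ∃! c : k × k, m = c.1 • v₁ + c.2 • v₂)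
    (h1T : HeckeT k • v₁ = v₁) (h2T : HeckeT k • v₂ = v₂)
    (h1S : HeckeS k • v₁ = 0) (h2S : HeckeS k • v₂ = v₁ + v₂) :
    ∃ (E : Type) (_ : AddCommGroup E) (_ : Module (Hecke k) E)
      (f : M1 →ₗ[Hecke k] E) (g : E →ₗ[Hecke k] MInd),
      Function.Injective f ∧ Function.Surjective g ∧
      LinearMap.range f = LinearMap.ker g ∧
      ¬∃ r : E →ₗ[Hecke k] M1, r.comp f = LinearMap.id :=
  stmt_7_general k M1 v hv hvT MInd v₁ v₂ hbasis h1T h2T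
end

section
/- Let k be a field of characteristic 2 and \mathcal{H} = k\langle T, S \rangle / (T^2 - 1, S^2 + S) as above. The unique (up to isomorphism) non-split self-extension of the simple right module M_1 (with vT = v, vS = 0) by itself is given by the module with basis v_1, v_2 satisfying v_1 T = v_1, v_2 T = v_1 + v_2, v_1 S = 0, v_2 S = 0; in particular dim_k Ext^1_{\mathcal{H}}(M_1, M_1) \geq 1. -/
section Aux

variable {k : Type} [Field k]

lemma heckeSsq : HeckeS k * HeckeS k + HeckeS k = 0 := by
  have h := RingQuot.mkAlgHom_rel k (HeckeRel.Ssq (k := k))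
  simp only [map_mul, map_add, map_one, map_zero] at h
  rw [add_mul, one_mul] at h
  simpa [HeckeS] using h

lemma hecke_induction (P : Hecke k → Prop)
    (halg : ∀ c : k, P (algebraMap k (Hecke k) c))
    (hT : P (HeckeT k)) (hS : P (HeckeS k))
    (hadd : ∀ a b, P a → P b → P (a + b))
    (hmul : ∀ a b, P a → P b → P (a * b)) : ∀ h, P h := by
  intro h
  obtain ⟨x, rfl⟩ := RingQuot.mkAlgHom_surjective k (HeckeRel k) h
  induction x with
  | grade0 c => simpa using halg c
  | grade1 b =>
    cases b
    · exact hS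
    · exact hT
  | mul a b ha hb => rw [map_mul]; exact hmul _ _ ha hb
  | add a b ha hb => rw [map_add]; exact hadd _ _ ha hb

lemma alg_smul_comm {M : Type} [AddCommGroup M] [Module (Hecke k) M] (c : k) (h : Hecke k)
    (x : M) :
    h • (algebraMap k (Hecke k) c • x) = algebraMap k (Hecke k) c • (h • x) := by
  rw [smul_smul, smul_smul, Algebra.commutes]

lemma alg_smul_smul {M : Type} [AddCommGroup M] [Module (Hecke k) M] (a b : k) (x : M) :
    algebraMap k (Hecke k) a • (algebraMap k (Hecke k) b • x)
      = algebraMap k (Hecke k) (a * b) • x := by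
  rw [smul_smul, ← map_mul]

lemma tower_smul_comm {M : Type} [AddCommGroup M] [Module (Hecke k) M] [Module k M]
    [IsScalarTower k (Hecke k) M] (c : k) (h : Hecke k) (x : M) :
    h • (c • x) = c • (h • x) := by
  rw [← algebraMap_smul (Hecke k) c x, alg_smul_comm, algebraMap_smul]

lemma hecke_linearity {M N : Type} [AddCommGroup M] [Module (Hecke k) M]
    [AddCommGroup N] [Module (Hecke k) N] (φ : M → N)
    (hadd : ∀ x y, φ (x + y) = φ x + φ y)
    (hsmul : ∀ (c : k) (x : M),
      φ (algebraMap k (Hecke k) c • x) = algebraMap k (Hecke k) c • φ x)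
    (hT : ∀ x, φ (HeckeT k • x) = HeckeT k • φ x)
    (hS : ∀ x, φ (HeckeS k • x) = HeckeS k • φ x) :
    ∀ (h : Hecke k) (x : M), φ (h • x) = h • φ x := by
  refine hecke_induction (fun h => ∀ x, φ (h • x) = h • φ x) hsmul hT hS ?_ ?_
  · intro a b ha hb x
    rw [add_smul, add_smul, hadd, ha, hb]
  · intro a b ha hb x
    rw [mul_smul, mul_smul, ha, hb]

end Aux
section Main

variable {k : Type} [Field k]
variable {M1 : Type} [AddCommGroup M1] [Module (Hecke k) M1] [Module k M1]
    [IsScalarTower k (Hecke k) M1]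
variable {E : Type} [AddCommGroup E] [Module (Hecke k) E] [Module k E]
    [IsScalarTower k (Hecke k) E]

/-- The uniqueness part: any non-split self extension of `M₁` is isomorphic to `E`. -/
lemma ext_unique (v : M1) (hv : ∀ m : M1, ∃! c : k, m = c • v)
    (hvT : HeckeT k • v = v) (hvS : HeckeS k • v = 0)
    (v₁ v₂ : E) (hbasis : ∀ e : E, ∃! c : k × k, e = c.1 • v₁ + c.2 • v₂)
    (h1T : HeckeT k • v₁ = v₁) (h2T : HeckeT k • v₂ = v₁ + v₂)
    (h1S : HeckeS k • v₁ = 0) (h2S : HeckeS k • v₂ = 0)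
    (E' : Type) [AddCommGroup E'] [Module (Hecke k) E']
    (f' : M1 →ₗ[Hecke k] E') (g' : E' →ₗ[Hecke k] M1)
    (hinj : Function.Injective f') (hsurj : Function.Surjective g')
    (hexact : LinearMap.range f' = LinearMap.ker g')
    (hnon : ¬∃ r : E' →ₗ[Hecke k] M1, r.comp f' = LinearMap.id) :
    Nonempty (E' ≃ₗ[Hecke k] E) := by
  classical
  -- coordinates on M1
  choose cM cMspec0 cMuniq0 using hv
  have cMspec : ∀ m : M1, m = cM m • v := cMspec0
  have cMuniq : ∀ (m : M1) (c : k), m = c • v → cM m = c :=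
    fun m c h => (cMuniq0 m c h).symm
  have smul_v_inj : ∀ a b : k, a • v = b • v → a = b := by
    intro a b h
    have h1 := cMuniq (a • v) a rfl
    rw [h] at h1
    rw [← h1, cMuniq (b • v) b rfl]
  -- coordinates on E
  choose cE cEspec0 cEuniq0 using hbasis
  have cEspec : ∀ e : E, e = (cE e).1 • v₁ + (cE e).2 • v₂ := cEspec0
  have cEuniq : ∀ (e : E) (p : k × k), e = p.1 • v₁ + p.2 • v₂ → cE e = p :=
    fun e p h => (cEuniq0 e p h).symm
  -- the image of v
  set w : E' := f' v with hw
  have hwT : HeckeT k • w = w := by rw [hw, ← map_smul, hvT]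
  have hwS : HeckeS k • w = 0 := by rw [hw, ← map_smul, hvS, map_zero]
  have halgw : ∀ c : k, f' (c • v) = algebraMap k (Hecke k) c • w := by
    intro c
    rw [← algebraMap_smul (Hecke k) c v, map_smul]
  have hgw : g' w = 0 := by
    have : w ∈ LinearMap.ker g' := hexact ▸ LinearMap.mem_range_self f' v
    exact this
  -- a lift of v
  obtain ⟨u, hu⟩ := hsurj v
  have hker : ∀ x : E', g' x = 0 → ∃ a : k, x = algebraMap k (Hecke k) a • w := by
    intro x hx
    have : x ∈ LinearMap.range f' := hexact ▸ hx
    obtain ⟨m, hm⟩ := this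
    exact ⟨cM m, by rw [← hm, ← halgw, ← cMspec m]⟩
  -- the action of T and S on u
  obtain ⟨c, hc⟩ : ∃ c : k, HeckeT k • u - u = algebraMap k (Hecke k) c • w := by
    apply hker
    rw [map_sub, map_smul, hu, hvT, sub_self]
  have hTu : HeckeT k • u = u + algebraMap k (Hecke k) c • w := by
    rw [← hc]; abel
  have hSu : HeckeS k • u = 0 := by
    obtain ⟨d, hd⟩ : ∃ d : k, HeckeS k • u = algebraMap k (Hecke k) d • w := by
      apply hker
      rw [map_smul, hu, hvS]
    have h0 : (HeckeS k * HeckeS k + HeckeS k) • u = 0 := by rw [heckeSsq, zero_smul]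
    rw [add_smul, mul_smul, hd, alg_smul_comm, hwS, smul_zero, zero_add] at h0
    rw [hd, h0]
  -- coordinates on E'
  have repr : ∀ x : E', ∃ p : k × k,
      x = algebraMap k (Hecke k) p.1 • w + algebraMap k (Hecke k) p.2 • u := by
    intro x
    have h1 : g' (x - algebraMap k (Hecke k) (cM (g' x)) • u) = 0 := by
      rw [map_sub, map_smul, hu, algebraMap_smul, ← cMspec, sub_self]
    obtain ⟨a, ha⟩ := hker _ h1
    refine ⟨(a, cM (g' x)), ?_⟩
    show x = algebraMap k (Hecke k) a • w + algebraMap k (Hecke k) (cM (g' x)) • u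
    rw [← ha]; abel
  have repr_zero : ∀ a b : k,
      algebraMap k (Hecke k) a • w + algebraMap k (Hecke k) b • u = 0 → a = 0 ∧ b = 0 := by
    intro a b h
    have hg : (b : k) • v = 0 := by
      have h1 := congrArg g' h
      rw [map_add, map_smul, map_smul, hgw, smul_zero, zero_add, hu, algebraMap_smul,
        map_zero] at h1
      exact h1
    have hb0 : b = 0 := smul_v_inj b 0 (by rw [hg, zero_smul])
    rw [hb0, map_zero, zero_smul, add_zero] at h
    have ha0 : a = 0 := by
      have h1 : f' (a • v) = f' 0 := by rw [map_zero, ← h, halgw]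
      have h2 : a • v = 0 := hinj h1
      exact smul_v_inj a 0 (by rw [h2, zero_smul])
    exact ⟨ha0, hb0⟩
  have repr_uniq : ∀ (p q : k × k),
      algebraMap k (Hecke k) p.1 • w + algebraMap k (Hecke k) p.2 • u
        = algebraMap k (Hecke k) q.1 • w + algebraMap k (Hecke k) q.2 • u → p = q := by
    intro p q h
    have h2 : algebraMap k (Hecke k) (p.1 - q.1) • w
        + algebraMap k (Hecke k) (p.2 - q.2) • u = 0 := by
      rw [map_sub, map_sub, sub_smul, sub_smul]
      rw [← sub_eq_zero] at h
      rw [← h]; abel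
    obtain ⟨h3, h4⟩ := repr_zero _ _ h2
    exact Prod.ext (sub_eq_zero.mp h3) (sub_eq_zero.mp h4)
  choose cE' cE'spec using repr
  have cE'uniq : ∀ (x : E') (p : k × k),
      x = algebraMap k (Hecke k) p.1 • w + algebraMap k (Hecke k) p.2 • u → cE' x = p := by
    intro x p h
    exact repr_uniq _ _ (by rw [← cE'spec x, ← h])
  have cE'add : ∀ x y : E', cE' (x + y) = cE' x + cE' y := by
    intro x y
    apply cE'uniq
    conv_lhs => rw [cE'spec x, cE'spec y]
    rw [Prod.fst_add, Prod.snd_add, map_add, map_add, add_smul, add_smul]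
    abel
  -- c must be nonzero, else the extension splits
  by_cases hc0 : c = 0
  · exfalso
    apply hnon
    have hTu' : HeckeT k • u = u := by rw [hTu, hc0, map_zero, zero_smul, add_zero]
    set r0 : E' → M1 := fun x => (cE' x).1 • v with hr0
    have r0def : ∀ x, r0 x = (cE' x).1 • v := fun _ => rfl
    have radd : ∀ x y, r0 (x + y) = r0 x + r0 y := by
      intro x y
      rw [r0def, r0def, r0def, cE'add, Prod.fst_add, add_smul]
    have rlin : ∀ (h : Hecke k) (x : E'), r0 (h • x) = h • r0 x := by
      apply hecke_linearity r0 radd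
      · intro c' x
        have hx : cE' (algebraMap k (Hecke k) c' • x) = (c' * (cE' x).1, c' * (cE' x).2) := by
          apply cE'uniq
          conv_lhs => rw [cE'spec x]
          rw [smul_add, alg_smul_smul, alg_smul_smul]
        rw [r0def, r0def, hx]
        show (c' * (cE' x).1) • v = algebraMap k (Hecke k) c' • ((cE' x).1 • v)
        rw [algebraMap_smul, mul_smul]
      · intro x
        have hx : cE' (HeckeT k • x) = cE' x := by
          apply cE'uniq
          conv_lhs => rw [cE'spec x]
          rw [smul_add, alg_smul_comm, alg_smul_comm, hwT, hTu']
        rw [r0def, r0def, hx, tower_smul_comm, hvT]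
      · intro x
        have hx : cE' (HeckeS k • x) = (0, 0) := by
          apply cE'uniq
          conv_lhs => rw [cE'spec x]
          rw [smul_add, alg_smul_comm, alg_smul_comm, hwS, hSu, smul_zero, smul_zero,
            add_zero]
          show (0 : E') = algebraMap k (Hecke k) 0 • w + algebraMap k (Hecke k) 0 • u
          rw [map_zero, zero_smul, zero_smul, add_zero]
        rw [r0def, r0def, hx, tower_smul_comm, hvS, smul_zero]
        show (0 : k) • v = (0 : M1)
        rw [zero_smul]
    refine ⟨{ toFun := r0, map_add' := radd, map_smul' := rlin }, ?_⟩
    apply LinearMap.ext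
    intro m
    simp only [LinearMap.coe_comp, Function.comp_apply, LinearMap.coe_mk, AddHom.coe_mk,
      LinearMap.id_coe, id_eq]
    have hm : cE' (f' m) = (cM m, 0) := by
      apply cE'uniq
      show f' m = algebraMap k (Hecke k) (cM m) • w + algebraMap k (Hecke k) 0 • u
      rw [map_zero, zero_smul, add_zero, ← halgw, ← cMspec]
    rw [r0def, hm]
    show cM m • v = m
    rw [← cMspec]
  · -- non-split case: build the isomorphism ψ : E → E'
    set ψ : E → E' := fun e =>
      algebraMap k (Hecke k) (c * (cE e).1) • w + algebraMap k (Hecke k) (cE e).2 • u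
      with hψ
    have ψdef : ∀ e, ψ e
        = algebraMap k (Hecke k) (c * (cE e).1) • w + algebraMap k (Hecke k) (cE e).2 • u :=
      fun _ => rfl
    have cEadd : ∀ x y : E, cE (x + y) = cE x + cE y := by
      intro x y
      apply cEuniq
      conv_lhs => rw [cEspec x, cEspec y]
      rw [Prod.fst_add, Prod.snd_add, add_smul, add_smul]
      abel
    have ψadd : ∀ x y, ψ (x + y) = ψ x + ψ y := by
      intro x y
      rw [ψdef, ψdef, ψdef, cEadd, Prod.fst_add, Prod.snd_add, mul_add, map_add, map_add,
        add_smul, add_smul]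
      abel
    have ψsmul : ∀ (h : Hecke k) (e : E), ψ (h • e) = h • ψ e := by
      apply hecke_linearity ψ ψadd
      · intro c' e
        have he : cE (algebraMap k (Hecke k) c' • e) = (c' * (cE e).1, c' * (cE e).2) := by
          apply cEuniq
          conv_lhs => rw [cEspec e]
          show algebraMap k (Hecke k) c' • ((cE e).1 • v₁ + (cE e).2 • v₂)
            = (c' * (cE e).1) • v₁ + (c' * (cE e).2) • v₂
          rw [smul_add, algebraMap_smul, algebraMap_smul, smul_smul, smul_smul]
        rw [ψdef, ψdef, he]
        show algebraMap k (Hecke k) (c * (c' * (cE e).1)) • w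
            + algebraMap k (Hecke k) (c' * (cE e).2) • u
          = algebraMap k (Hecke k) c' •
            (algebraMap k (Hecke k) (c * (cE e).1) • w + algebraMap k (Hecke k) (cE e).2 • u)
        rw [smul_add, alg_smul_smul, alg_smul_smul, mul_left_comm]
      · intro e
        have he : cE (HeckeT k • e) = ((cE e).1 + (cE e).2, (cE e).2) := by
          apply cEuniq
          conv_lhs => rw [cEspec e]
          show HeckeT k • ((cE e).1 • v₁ + (cE e).2 • v₂)
            = ((cE e).1 + (cE e).2) • v₁ + (cE e).2 • v₂
          rw [smul_add, tower_smul_comm, tower_smul_comm, h1T, h2T, add_smul, smul_add]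
          abel
        rw [ψdef, ψdef, he]
        show algebraMap k (Hecke k) (c * ((cE e).1 + (cE e).2)) • w
            + algebraMap k (Hecke k) (cE e).2 • u
          = HeckeT k •
            (algebraMap k (Hecke k) (c * (cE e).1) • w + algebraMap k (Hecke k) (cE e).2 • u)
        rw [smul_add, alg_smul_comm, alg_smul_comm, hwT, hTu, smul_add, alg_smul_smul,
          mul_add, map_add, add_smul, mul_comm (cE e).2 c]
        abel
      · intro e
        have he : cE (HeckeS k • e) = (0, 0) := by
          apply cEuniq
          conv_lhs => rw [cEspec e]
          show HeckeS k • ((cE e).1 • v₁ + (cE e).2 • v₂)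
            = (0 : k) • v₁ + (0 : k) • v₂
          rw [smul_add, tower_smul_comm, tower_smul_comm, h1S, h2S, smul_zero, smul_zero,
            add_zero, zero_smul, zero_smul, add_zero]
        rw [ψdef, ψdef, he]
        show algebraMap k (Hecke k) (c * 0) • w + algebraMap k (Hecke k) 0 • u
          = HeckeS k •
            (algebraMap k (Hecke k) (c * (cE e).1) • w + algebraMap k (Hecke k) (cE e).2 • u)
        rw [smul_add, alg_smul_comm, alg_smul_comm, hwS, hSu, smul_zero, smul_zero,
          add_zero, mul_zero, map_zero, zero_smul, zero_smul, add_zero]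
    set Ψ : E →ₗ[Hecke k] E' :=
      { toFun := ψ, map_add' := ψadd, map_smul' := ψsmul } with hΨ
    have Ψdef : ∀ e, Ψ e = ψ e := fun _ => rfl
    have hbij : Function.Bijective Ψ := by
      constructor
      · rw [injective_iff_map_eq_zero]
        intro e he
        rw [Ψdef, ψdef] at he
        have h0 : ((c * (cE e).1, (cE e).2) : k × k) = ((0 : k), (0 : k)) := by
          apply repr_uniq
          show algebraMap k (Hecke k) (c * (cE e).1) • w + algebraMap k (Hecke k) (cE e).2 • u
            = algebraMap k (Hecke k) 0 • w + algebraMap k (Hecke k) 0 • u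
          rw [he, map_zero, zero_smul, zero_smul, add_zero]
        have h1 : (cE e).1 = 0 := by
          have h2 : c * (cE e).1 = 0 := congrArg Prod.fst h0
          exact (mul_eq_zero.mp h2).resolve_left hc0
        have h2 : (cE e).2 = 0 := congrArg Prod.snd h0
        rw [cEspec e, h1, h2, zero_smul, zero_smul, add_zero]
      · intro x
        refine ⟨(c⁻¹ * (cE' x).1) • v₁ + (cE' x).2 • v₂, ?_⟩
        have he : cE ((c⁻¹ * (cE' x).1) • v₁ + (cE' x).2 • v₂)
            = (c⁻¹ * (cE' x).1, (cE' x).2) := cEuniq _ _ rfl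
        rw [Ψdef, ψdef, he]
        show algebraMap k (Hecke k) (c * (c⁻¹ * (cE' x).1)) • w
            + algebraMap k (Hecke k) (cE' x).2 • u = x
        rw [← mul_assoc, mul_inv_cancel₀ hc0, one_mul, ← cE'spec]
    exact ⟨(LinearEquiv.ofBijective Ψ hbij).symm⟩

end Main

/-- Let `k` be a field of characteristic `2` and `ℋ = k⟨T,S⟩/(T² - 1, S² + S)`.  The unique
(up to isomorphism) non-split self-extension of the simple module `M₁` (with `vT = v`,
`vS = 0`) by itself is given by the module `E` with basis `v₁, v₂` satisfying `v₁T = v₁`,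
`v₂T = v₁ + v₂`, `v₁S = 0`, `v₂S = 0`; in particular `dim_k Ext¹_ℋ(M₁, M₁) ≥ 1`, i.e. `E`
is a non-split self-extension of `M₁` and every non-split self-extension of `M₁` is
isomorphic to `E`. -/
theorem stmt_8 (k : Type) [Field k] [CharP k 2]
    (M1 : Type) [AddCommGroup M1] [Module (Hecke k) M1] [Module k M1]
    [IsScalarTower k (Hecke k) M1]
    (v : M1) (hv : ∀ m : M1, ∃! c : k, m = c • v)
    (hvT : HeckeT k • v = v) (hvS : HeckeS k • v = 0)
    (E : Type) [AddCommGroup E] [Module (Hecke k) E] [Module k E]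
    [IsScalarTower k (Hecke k) E]
    (v₁ v₂ : E) (hbasis : ∀ e : E, ∃! c : k × k, e = c.1 • v₁ + c.2 • v₂)
    (h1T : HeckeT k • v₁ = v₁) (h2T : HeckeT k • v₂ = v₁ + v₂)
    (h1S : HeckeS k • v₁ = 0) (h2S : HeckeS k • v₂ = 0) :
    (∃ (f : M1 →ₗ[Hecke k] E) (g : E →ₗ[Hecke k] M1),
      Function.Injective f ∧ Function.Surjective g ∧
      LinearMap.range f = LinearMap.ker g ∧
      ¬∃ r : E →ₗ[Hecke k] M1, r.comp f = LinearMap.id) ∧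
    ∀ (E' : Type) (_ : AddCommGroup E') (_ : Module (Hecke k) E')
      (f' : M1 →ₗ[Hecke k] E') (g' : E' →ₗ[Hecke k] M1),
      Function.Injective f' → Function.Surjective g' →
      LinearMap.range f' = LinearMap.ker g' →
      (¬∃ r : E' →ₗ[Hecke k] M1, r.comp f' = LinearMap.id) →
      Nonempty (E' ≃ₗ[Hecke k] E) := by
  classical
  constructor
  · -- existence of the extension structure on E
    choose cM cMspec0 cMuniq0 using hv
    have cMspec : ∀ m : M1, m = cM m • v := cMspec0
    have cMuniq : ∀ (m : M1) (c : k), m = c • v → cM m = c :=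
      fun m c h => (cMuniq0 m c h).symm
    have smul_v_inj : ∀ a b : k, a • v = b • v → a = b := by
      intro a b h
      have h1 := cMuniq (a • v) a rfl
      rw [h] at h1
      rw [← h1, cMuniq (b • v) b rfl]
    have vne : v ≠ 0 := by
      intro h0
      have h1 : (0 : k) = 1 := smul_v_inj 0 1 (by rw [h0, smul_zero, smul_zero])
      exact zero_ne_one h1
    choose cE cEspec0 cEuniq0 using hbasis
    have cEspec : ∀ e : E, e = (cE e).1 • v₁ + (cE e).2 • v₂ := cEspec0
    have cEuniq : ∀ (e : E) (p : k × k), e = p.1 • v₁ + p.2 • v₂ → cE e = p :=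
      fun e p h => (cEuniq0 e p h).symm
    have cMadd : ∀ x y : M1, cM (x + y) = cM x + cM y := by
      intro x y
      apply cMuniq
      conv_lhs => rw [cMspec x, cMspec y]
      rw [add_smul]
    have cEadd : ∀ x y : E, cE (x + y) = cE x + cE y := by
      intro x y
      apply cEuniq
      conv_lhs => rw [cEspec x, cEspec y]
      rw [Prod.fst_add, Prod.snd_add, add_smul, add_smul]
      abel
    have hTm : ∀ m : M1, HeckeT k • m = m := by
      intro m
      conv_lhs => rw [cMspec m]
      rw [tower_smul_comm, hvT, ← cMspec]
    have hSm : ∀ m : M1, HeckeS k • m = 0 := by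
      intro m
      conv_lhs => rw [cMspec m]
      rw [tower_smul_comm, hvS, smul_zero]
    have cM0 : cM 0 = 0 := cMuniq 0 0 (by rw [zero_smul])
    have hTe : ∀ e : E, HeckeT k • e = ((cE e).1 + (cE e).2) • v₁ + (cE e).2 • v₂ := by
      intro e
      conv_lhs => rw [cEspec e]
      rw [smul_add, tower_smul_comm, tower_smul_comm, h1T, h2T, add_smul, smul_add]
      abel
    have hSe : ∀ e : E, HeckeS k • e = 0 := by
      intro e
      conv_lhs => rw [cEspec e]
      rw [smul_add, tower_smul_comm, tower_smul_comm, h1S, h2S, smul_zero, smul_zero,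
        add_zero]
    have cE0 : cE 0 = (0, 0) := cEuniq 0 (0, 0) (by
      show (0 : E) = (0 : k) • v₁ + (0 : k) • v₂
      rw [zero_smul, zero_smul, add_zero])
    -- the map f
    set f0 : M1 → E := fun m => cM m • v₁ with hf0
    have f0def : ∀ m, f0 m = cM m • v₁ := fun _ => rfl
    have fadd : ∀ x y, f0 (x + y) = f0 x + f0 y := by
      intro x y
      rw [f0def, f0def, f0def, cMadd, add_smul]
    have flin : ∀ (h : Hecke k) (m : M1), f0 (h • m) = h • f0 m := by
      apply hecke_linearity f0 fadd
      · intro c' m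
        have h1 : cM (algebraMap k (Hecke k) c' • m) = c' * cM m := by
          apply cMuniq
          conv_lhs => rw [cMspec m]
          rw [algebraMap_smul, smul_smul]
        rw [f0def, f0def, h1, algebraMap_smul, mul_smul]
      · intro m
        rw [hTm, f0def, tower_smul_comm, h1T]
      · intro m
        rw [hSm, f0def, f0def, cM0, zero_smul, tower_smul_comm, h1S, smul_zero]
    -- the map g
    set g0 : E → M1 := fun e => (cE e).2 • v with hg0
    have g0def : ∀ e, g0 e = (cE e).2 • v := fun _ => rfl
    have gadd : ∀ x y, g0 (x + y) = g0 x + g0 y := by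
      intro x y
      rw [g0def, g0def, g0def, cEadd, Prod.snd_add, add_smul]
    have glin : ∀ (h : Hecke k) (e : E), g0 (h • e) = h • g0 e := by
      apply hecke_linearity g0 gadd
      · intro c' e
        have h1 : cE (algebraMap k (Hecke k) c' • e) = (c' * (cE e).1, c' * (cE e).2) := by
          apply cEuniq
          conv_lhs => rw [cEspec e]
          show algebraMap k (Hecke k) c' • ((cE e).1 • v₁ + (cE e).2 • v₂)
            = (c' * (cE e).1) • v₁ + (c' * (cE e).2) • v₂
          rw [smul_add, algebraMap_smul, algebraMap_smul, smul_smul, smul_smul]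
        rw [g0def, g0def, h1, algebraMap_smul, mul_smul]
      · intro e
        have h1 : cE (HeckeT k • e) = ((cE e).1 + (cE e).2, (cE e).2) :=
          cEuniq _ _ (hTe e)
        rw [g0def, g0def, h1, tower_smul_comm, hvT]
      · intro e
        rw [hSe, g0def, g0def, cE0, tower_smul_comm, hvS, smul_zero]
        show (0 : k) • v = (0 : M1)
        rw [zero_smul]
    set f : M1 →ₗ[Hecke k] E := { toFun := f0, map_add' := fadd, map_smul' := flin }
      with hf
    set g : E →ₗ[Hecke k] M1 := { toFun := g0, map_add' := gadd, map_smul' := glin }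
      with hg
    have fdef : ∀ m, f m = cM m • v₁ := fun _ => rfl
    have gdef : ∀ e, g e = (cE e).2 • v := fun _ => rfl
    have cEv₁ : ∀ a : k, cE (a • v₁) = (a, 0) := by
      intro a
      apply cEuniq
      show a • v₁ = a • v₁ + (0 : k) • v₂
      rw [zero_smul, add_zero]
    have cEv₂ : ∀ a : k, cE (a • v₂) = (0, a) := by
      intro a
      apply cEuniq
      show a • v₂ = (0 : k) • v₁ + a • v₂
      rw [zero_smul, zero_add]
    have cMv : cM v = 1 := cMuniq v 1 (by rw [one_smul])
    have cMav : ∀ a : k, cM (a • v) = a := fun a => cMuniq _ _ rfl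
    have smul_v₁_inj : ∀ a b : k, a • v₁ = b • v₁ → a = b := by
      intro a b h
      have h1 := cEv₁ a
      rw [h, cEv₁ b] at h1
      exact congrArg Prod.fst h1.symm
    refine ⟨f, g, ?_, ?_, ?_, ?_⟩
    · intro m m' h
      rw [fdef, fdef] at h
      have h1 := smul_v₁_inj _ _ h
      rw [cMspec m, h1, ← cMspec m']
    · intro m
      refine ⟨cM m • v₂, ?_⟩
      rw [gdef, cEv₂]
      exact (cMspec m).symm
    · ext e
      simp only [LinearMap.mem_range, LinearMap.mem_ker]
      constructor
      · rintro ⟨m, rfl⟩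
        rw [gdef, fdef, cEv₁]
        show (0 : k) • v = (0 : M1)
        rw [zero_smul]
      · intro h
        rw [gdef] at h
        have h2 : (cE e).2 = 0 := smul_v_inj _ 0 (by rw [h, zero_smul])
        refine ⟨(cE e).1 • v, ?_⟩
        rw [fdef, cMav]
        conv_rhs => rw [cEspec e]
        rw [h2, zero_smul, add_zero]
    · rintro ⟨r, hr⟩
      have hrv₁ : r v₁ = v := by
        have h1 := congrArg (fun φ => φ v) hr
        simp only [LinearMap.coe_comp, Function.comp_apply, LinearMap.id_coe, id_eq] at h1
        rw [fdef, cMv, one_smul] at h1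
        exact h1
      have h2 : r (HeckeT k • v₂) = HeckeT k • r v₂ := map_smul r _ _
      rw [h2T, map_add, hrv₁, hTm] at h2
      have h3 : v = 0 := by
        have h5 : v + r v₂ = 0 + r v₂ := by rw [zero_add]; exact h2
        exact add_right_cancel h5
      exact vne h3
  · intro E' iA iM f' g' h1 h2 h3 h4
    exact @ext_unique k _ M1 _ _ _ _ E _ _ _ _ v hv hvT hvS v₁ v₂ hbasis h1T h2T h1S h2S
      E' iA iM f' g' h1 h2 h3 h4
end

section
/- Let \mathfrak{C} be an abelian category, \mathfrak{T} a thick (Serre) subcategory, and \mathfrak{D} = \mathfrak{C}/\mathfrak{T} the quotient category with quotient functor T. If P is a projective object of \mathfrak{C} such that Hom_{\mathfrak{C}}(P, X) = 0 for every object X of \mathfrak{T}, then T(P) is projective in \mathfrak{D}, and for every object N of \mathfrak{C} the functor T induces an isomorphism Hom_{\mathfrak{C}}(P, N) \cong Hom_{\mathfrak{D}}(T P, T N). -/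
open CategoryTheory Limits

/-!
Let `W` be the class of morphisms whose kernel and cokernel lie in `𝒯`. The hypothesis on `P`
makes `Hom(P, -)` turn every `s ∈ W` into a bijection: a map `P ⟶ Y` killed by `s` factors
through `ker s ∈ 𝒯`, hence is zero, and a map `P ⟶ Z` vanishes on `coker s ∈ 𝒯`, so it factors through the
image of `s` and lifts along the epimorphism onto that image because `P` is projective.
Since `W` admits a calculus of left fractions, every morphism `T P ⟶ T N` is a fraction
`T s⁻¹ ∘ T f` with `s ∈ W`, which gives the bijection on morphisms. Every epimorphism of the
quotient is, up to isomorphism, the image of an epimorphism of `C`, along which maps out of `P`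
lift; hence `T P` is projective. If `𝒯` is empty, `W` is empty and `T` is an equivalence.
-/

namespace CategoryTheory

open MorphismProperty

section Localization

variable {C D : Type*} [Category C] [Category D] (L : C ⥤ D) (W : MorphismProperty C)
  [L.IsLocalization W]

lemma Functor.IsLocalization.isEquivalence_of_le_isomorphisms
    (hW : W ≤ isomorphisms C) : L.IsEquivalence := by
  have := Functor.IsLocalization.for_id W hW
  have : (L ⋙ (Localization.uniq L (𝟭 C) W).functor).IsEquivalence :=
    Functor.isEquivalence_of_iso (Localization.compUniqFunctor L (𝟭 C) W).symm
  exact Functor.isEquivalence_of_comp_right L (Localization.uniq L (𝟭 C) W).functor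

lemma Localization.map_bijective_of_isColocal [W.HasLeftCalculusOfFractions] {X : C}
    (hX : W.isColocal X) (Y : C) : Function.Bijective (fun f : X ⟶ Y => L.map f) := by
  refine ⟨fun f₁ f₂ h => ?_, fun g => ?_⟩
  · obtain ⟨Z, s, hs, hf⟩ := (map_eq_iff_postcomp L W f₁ f₂).1 h
    exact (hX s hs).1 hf
  · obtain ⟨φ, rfl⟩ := Localization.exists_leftFraction L W g
    obtain ⟨d, hd⟩ := (hX φ.s φ.hs).2 φ.f
    have := Localization.inverts L W φ.s φ.hs
    refine ⟨d, ?_⟩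
    rw [← cancel_mono (L.map φ.s), LeftFraction.map_comp_map_s, ← hd, L.map_comp]

end Localization

namespace ObjectProperty

variable {C : Type*} [Category C] [Abelian C] (P : ObjectProperty C) [P.IsSerreClass]

lemma isColocal_isoModSerre_of_projective (X : C) [Projective X]
    (hX : ∀ Y, P Y → ∀ f : X ⟶ Y, f = 0) : P.isoModSerre.isColocal X := by
  intro Y Z s hs
  refine ⟨fun f₁ f₂ h => ?_, fun g => ?_⟩
  · have hs₀ : (f₁ - f₂) ≫ s = 0 := by simp only [Preadditive.sub_comp, h, sub_self]
    rw [← sub_eq_zero, ← kernel.lift_ι s _ hs₀, hX _ hs.1 (kernel.lift s _ hs₀), zero_comp]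
  · have hg : g ≫ cokernel.π s = 0 := hX _ hs.2 _
    obtain ⟨d, hd⟩ := Projective.factors (kernel.lift _ g hg) (Abelian.factorThruImage s)
    refine ⟨d, ?_⟩
    dsimp only
    rw [← Abelian.image.fac s, ← Category.assoc, hd, kernel.lift_ι]

lemma SerreClassLocalization.projective_obj {D : Type*} [Category D] (L : C ⥤ D)
    [L.IsLocalization P.isoModSerre] (X : C) [Projective X] (hX : P.isoModSerre.isColocal X) :
    Projective (L.obj X) := by
  let := Localization.preadditive L P.isoModSerre
  have := Localization.functor_additive L P.isoModSerre
  constructor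
  intro B E m e _
  obtain ⟨X', Y', f, _, ⟨α⟩⟩ := (epi_iff L P e).1 ‹_›
  obtain ⟨m', hm'⟩ := (Localization.map_bijective_of_isColocal L _ hX Y').2 (m ≫ α.inv.right)
  obtain ⟨d, hd⟩ := Projective.factors m' f
  refine ⟨L.map d ≫ α.hom.left, ?_⟩
  have hα : α.hom.left ≫ e = L.map f ≫ α.hom.right := α.hom.w
  dsimp only at hm'
  rw [Category.assoc, hα, ← L.map_comp_assoc, hd, hm', Category.assoc, ← Arrow.comp_right,
    α.inv_hom_id, Arrow.id_right]
  exact Category.comp_id m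

end ObjectProperty

end CategoryTheory

/-- Let `𝔠` be an abelian category, `𝔱` a thick (Serre) subcategory (given as a property of
objects closed under subobjects, quotients and extensions), and `𝔡 = 𝔠/𝔱` the quotient
category with quotient functor `T` (realized as the localization of `𝔠` at the class of
morphisms whose kernel and cokernel lie in `𝔱`).  If `P` is a projective object of `𝔠` such
that `Hom_𝔠(P, X) = 0` for every object `X` of `𝔱`, then `T(P)` is projective in `𝔡`, and
for every object `N` of `𝔠` the functor `T` induces an isomorphism
`Hom_𝔠(P, N) ≅ Hom_𝔡(T P, T N)`. -/
theorem stmt_9 {C : Type*} [Category C] [Abelian C]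
    (𝒯 : C → Prop)
    (hsub : ∀ ⦃X Y : C⦄ (f : X ⟶ Y), Mono f → 𝒯 Y → 𝒯 X)
    (hquot : ∀ ⦃X Y : C⦄ (f : X ⟶ Y), Epi f → 𝒯 X → 𝒯 Y)
    (hext : ∀ S : ShortComplex C, S.ShortExact → 𝒯 S.X₁ → 𝒯 S.X₃ → 𝒯 S.X₂)
    {D : Type*} [Category D]
    (T : C ⥤ D)
    (hT : T.IsLocalization
      (fun _ _ f => 𝒯 (kernel f) ∧ 𝒯 (cokernel f) : MorphismProperty C))
    (P : C) [Projective P] (hP : ∀ X : C, 𝒯 X → ∀ f : P ⟶ X, f = 0)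
    (N : C) :
    Projective (T.obj P) ∧ Function.Bijective (fun f : P ⟶ N => T.map f) := by
  set W : MorphismProperty C := fun _ _ f => 𝒯 (kernel f) ∧ 𝒯 (cokernel f)
  by_cases h𝒯 : ∃ X₀, 𝒯 X₀
  · obtain ⟨X₀, hX₀⟩ := h𝒯
    have : ObjectProperty.IsSerreClass 𝒯 :=
      { exists_zero := ⟨_, isZero_zero C, hsub 0 ((isZero_zero C).mono _) hX₀⟩
        prop_of_mono := fun f _ hY => hsub f inferInstance hY
        prop_of_epi := fun f _ hX => hquot f inferInstance hX
        prop_X₂_of_shortExact := hext _ }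
    have : T.IsLocalization (ObjectProperty.isoModSerre 𝒯) := hT
    have hP' := ObjectProperty.isColocal_isoModSerre_of_projective 𝒯 P hP
    exact ⟨ObjectProperty.SerreClassLocalization.projective_obj 𝒯 T P hP',
      Localization.map_bijective_of_isColocal T _ hP' N⟩
  · have : T.IsEquivalence := Functor.IsLocalization.isEquivalence_of_le_isomorphisms T W
      fun _ _ _ hf => (h𝒯 ⟨_, hf.1⟩).elim
    exact ⟨(T.asEquivalence.map_projective_iff P).2 ‹_›,
      (Functor.FullyFaithful.ofFullyFaithful T).map_bijective P N⟩
end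

section
/- Let K' be the subgroup of GL_2(\mathbb{Z}_2) consisting of all products g = sz with s \in SL_2(\mathbb{Z}_2), s \equiv I mod 4, and z a scalar matrix with z \in 1 + 4\mathbb{Z}_2. Then the map g \mapsto (g \cdot (K' \cap Z), (\det g)^{-1}) is an isomorphism of topological groups K' \cong (K'/(K' \cap Z)) \times \Gamma, where Z is the center of GL_2(\mathbb{Q}_2) and \Gamma = (K' \cap Z)^2 = \{ z^2 : z \in K' \cap Z \}. -/
open Matrix

/-- The subgroup `K'` of `GL₂(ℤ₂)` consisting of all products `g = s·z` with
`s ∈ SL₂(ℤ₂)`, `s ≡ I mod 4`, and `z` a scalar matrix with scalar in `1 + 4ℤ₂`. -/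
def Kprime : Subgroup (GL (Fin 2) ℤ_[2]) where
  carrier := {g | ∃ s z : GL (Fin 2) ℤ_[2],
    g = s * z ∧
    Matrix.det (s : Matrix (Fin 2) (Fin 2) ℤ_[2]) = 1 ∧
    (∃ a : Matrix (Fin 2) (Fin 2) ℤ_[2],
      (s : Matrix (Fin 2) (Fin 2) ℤ_[2]) = 1 + 4 * a) ∧
    (∃ c : ℤ_[2], (z : Matrix (Fin 2) (Fin 2) ℤ_[2]) = c • (1 : Matrix (Fin 2) (Fin 2) ℤ_[2])
      ∧ ∃ b : ℤ_[2], c = 1 + 4 * b)}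
  one_mem' := ⟨1, 1, by simp, by simp, ⟨0, by simp⟩, ⟨1, by simp, 0, by ring⟩⟩
  mul_mem' := by
    rintro g₁ g₂ ⟨s₁, z₁, rfl, hd₁, ⟨a₁, ha₁⟩, ⟨c₁, hc₁, b₁, hb₁⟩⟩
      ⟨s₂, z₂, rfl, hd₂, ⟨a₂, ha₂⟩, ⟨c₂, hc₂, b₂, hb₂⟩⟩
    have hcomm : z₁ * s₂ = s₂ * z₁ := by
      ext
      rw [Units.val_mul, Units.val_mul, hc₁, smul_mul_assoc, mul_smul_comm, one_mul, mul_one]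
    refine ⟨s₁ * s₂, z₁ * z₂, ?_, ?_, ⟨a₁ + a₂ + 4 * (a₁ * a₂), ?_⟩,
      ⟨c₁ * c₂, ?_, b₁ + b₂ + 4 * (b₁ * b₂), by rw [hb₁, hb₂]; ring⟩⟩
    · rw [mul_assoc s₁ z₁ (s₂ * z₂), ← mul_assoc z₁ s₂ z₂, hcomm, mul_assoc s₂ z₁ z₂,
        ← mul_assoc s₁ s₂ (z₁ * z₂)]
    · rw [Units.val_mul, Matrix.det_mul, hd₁, hd₂, one_mul]
    · rw [Units.val_mul, ha₁, ha₂]; noncomm_ring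
    · rw [Units.val_mul, hc₁, hc₂, smul_mul_assoc, mul_smul_comm, one_mul, smul_smul]
  inv_mem' := by
    rintro g ⟨s, z, rfl, hd, ⟨a, ha⟩, ⟨c, hc, b, hb⟩⟩
    have hzz : ((z : Matrix (Fin 2) (Fin 2) ℤ_[2])) *
        ((z⁻¹ : GL (Fin 2) ℤ_[2]) : Matrix (Fin 2) (Fin 2) ℤ_[2]) = 1 := by
      rw [← Units.val_mul, mul_inv_cancel, Units.val_one]
    have hsmul : c • ((z⁻¹ : GL (Fin 2) ℤ_[2]) : Matrix (Fin 2) (Fin 2) ℤ_[2]) =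
        (1 : Matrix (Fin 2) (Fin 2) ℤ_[2]) := by
      calc c • ((z⁻¹ : GL (Fin 2) ℤ_[2]) : Matrix (Fin 2) (Fin 2) ℤ_[2])
          = (c • (1 : Matrix (Fin 2) (Fin 2) ℤ_[2])) *
            ((z⁻¹ : GL (Fin 2) ℤ_[2]) : Matrix (Fin 2) (Fin 2) ℤ_[2]) := by
            rw [smul_mul_assoc, one_mul]
        _ = ((z : Matrix (Fin 2) (Fin 2) ℤ_[2])) *
            ((z⁻¹ : GL (Fin 2) ℤ_[2]) : Matrix (Fin 2) (Fin 2) ℤ_[2]) := by rw [← hc]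
        _ = 1 := hzz
    set d : ℤ_[2] := ((z⁻¹ : GL (Fin 2) ℤ_[2]) : Matrix (Fin 2) (Fin 2) ℤ_[2]) 0 0 with hdd
    have hcd : c * d = 1 := by
      have h00 := congrFun (congrFun hsmul 0) 0
      rw [hdd]
      simpa [Matrix.one_apply, smul_eq_mul] using h00
    have hzinv : ((z⁻¹ : GL (Fin 2) ℤ_[2]) : Matrix (Fin 2) (Fin 2) ℤ_[2]) =
        d • (1 : Matrix (Fin 2) (Fin 2) ℤ_[2]) := by
      have h1 : d • (c • ((z⁻¹ : GL (Fin 2) ℤ_[2]) : Matrix (Fin 2) (Fin 2) ℤ_[2])) =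
          d • (1 : Matrix (Fin 2) (Fin 2) ℤ_[2]) := by rw [hsmul]
      rwa [smul_smul, mul_comm d c, hcd, one_smul] at h1
    have hsinv : ((s⁻¹ : GL (Fin 2) ℤ_[2]) : Matrix (Fin 2) (Fin 2) ℤ_[2]) =
        1 + 4 * (-(a * ((s⁻¹ : GL (Fin 2) ℤ_[2]) : Matrix (Fin 2) (Fin 2) ℤ_[2]))) := by
      have h : ((s : Matrix (Fin 2) (Fin 2) ℤ_[2])) *
          ((s⁻¹ : GL (Fin 2) ℤ_[2]) : Matrix (Fin 2) (Fin 2) ℤ_[2]) = 1 := by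
        rw [← Units.val_mul, mul_inv_cancel, Units.val_one]
      rw [ha] at h
      set t := ((s⁻¹ : GL (Fin 2) ℤ_[2]) : Matrix (Fin 2) (Fin 2) ℤ_[2]) with ht
      have key : t + 4 * (a * t) = 1 := by
        calc t + 4 * (a * t) = (1 + 4 * a) * t := by noncomm_ring
          _ = 1 := h
      rw [← key]; noncomm_ring
    have hdetinv : Matrix.det ((s⁻¹ : GL (Fin 2) ℤ_[2]) : Matrix (Fin 2) (Fin 2) ℤ_[2]) = 1 := by
      have h : ((s : Matrix (Fin 2) (Fin 2) ℤ_[2])) *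
          ((s⁻¹ : GL (Fin 2) ℤ_[2]) : Matrix (Fin 2) (Fin 2) ℤ_[2]) = 1 := by
        rw [← Units.val_mul, mul_inv_cancel, Units.val_one]
      have h3 := congrArg Matrix.det h
      rw [Matrix.det_mul, hd, one_mul, Matrix.det_one] at h3
      exact h3
    have hcomm' : z⁻¹ * s⁻¹ = s⁻¹ * z⁻¹ := by
      ext
      rw [Units.val_mul, Units.val_mul, hzinv, smul_mul_assoc, mul_smul_comm, one_mul, mul_one]
    refine ⟨s⁻¹, z⁻¹, ?_, hdetinv,
      ⟨-(a * ((s⁻¹ : GL (Fin 2) ℤ_[2]) : Matrix (Fin 2) (Fin 2) ℤ_[2])), hsinv⟩,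
      ⟨d, hzinv, -(b * d), ?_⟩⟩
    · rw [_root_.mul_inv_rev, hcomm']
    · have h4 : (1 + 4 * b) * d = 1 := by rw [← hb]; exact hcd
      linear_combination h4

/-- The intersection `K' ∩ Z` of `K'` with the center `Z` of `GL₂(ℚ₂)` (equivalently, with
the center of `GL₂(ℤ₂)`), as a subgroup of `K'`. -/
noncomputable def KprimeCenter : Subgroup Kprime :=
  (Subgroup.center (GL (Fin 2) ℤ_[2])).comap Kprime.subtype

instance : KprimeCenter.Normal := by
  constructor
  intro n hn g
  have hn' : (n : GL (Fin 2) ℤ_[2]) ∈ Subgroup.center (GL (Fin 2) ℤ_[2]) := hn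
  have h : ((g * n * g⁻¹ : Kprime) : GL (Fin 2) ℤ_[2]) = (n : GL (Fin 2) ℤ_[2]) := by
    push_cast
    rw [Subgroup.mem_center_iff.mp hn' (g : GL (Fin 2) ℤ_[2]), mul_assoc, mul_inv_cancel,
      mul_one]
  show ((g * n * g⁻¹ : Kprime) : GL (Fin 2) ℤ_[2]) ∈ Subgroup.center (GL (Fin 2) ℤ_[2])
  rw [h]; exact hn'

/-- The subgroup `Γ = (K' ∩ Z)² = { z² : z ∈ K' ∩ Z }` of `K'`. -/
def KprimeGamma : Subgroup Kprime where
  carrier := {x | ∃ z ∈ KprimeCenter, x = z * z}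
  one_mem' := ⟨1, one_mem _, by simp⟩
  mul_mem' := by
    rintro x y ⟨z₁, hz₁, rfl⟩ ⟨z₂, hz₂, rfl⟩
    refine ⟨z₁ * z₂, mul_mem hz₁ hz₂, ?_⟩
    have h₁ : (z₁ : GL (Fin 2) ℤ_[2]) ∈ Subgroup.center (GL (Fin 2) ℤ_[2]) := hz₁
    have hc : z₂ * z₁ = z₁ * z₂ := by
      apply Subtype.ext
      push_cast
      exact Subgroup.mem_center_iff.mp h₁ (z₂ : GL (Fin 2) ℤ_[2])
    have : z₁ * z₂ * (z₁ * z₂) = z₁ * z₁ * (z₂ * z₂) := by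
      rw [mul_assoc z₁ z₂ (z₁ * z₂), ← mul_assoc z₂ z₁ z₂, hc, mul_assoc z₁ z₂ z₂,
        ← mul_assoc z₁ z₁ (z₂ * z₂)]
    rw [this]
  inv_mem' := by
    rintro x ⟨z, hz, rfl⟩
    exact ⟨z⁻¹, inv_mem hz, by rw [_root_.mul_inv_rev]⟩

/-!
Both components of `g ↦ (g (K' ∩ Z), (det g)⁻¹)` are continuous homomorphisms. An element
of `K' ∩ Z` is a scalar `u ∈ 1 + 4ℤ₂`, so if moreover `det = u² = 1` then `u = 1`, because
`u + 1 = 2 (1 + 2b)` is not a zero divisor: the map is injective. If `det g = u²` and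
`γ = v²` with `u, v ∈ 1 + 4ℤ₂`, then `g (uv)⁻¹` lies in the coset of `g` and has
determinant `v⁻²`: the map is surjective. Finally `K'` is compact, being the product of two
compact sets, and `K' ∩ Z` is closed, so the target is Hausdorff and the inverse of the
continuous bijection is continuous as well.
-/

namespace PadicInt

noncomputable def unitsCongrOne (p : ℕ) [Fact p.Prime] (n : ℕ) : Subgroup ℤ_[p]ˣ :=
  (Units.map (toZModPow n : ℤ_[p] →+* ZMod (p ^ n)).toMonoidHom).ker

variable {p : ℕ} [Fact p.Prime]

lemma mem_unitsCongrOne_iff {n : ℕ} {u : ℤ_[p]ˣ} :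
    u ∈ unitsCongrOne p n ↔ ∃ b, (u : ℤ_[p]) = 1 + (p : ℤ_[p]) ^ n * b := by
  rw [unitsCongrOne, MonoidHom.mem_ker, Units.ext_iff, Units.coe_map, Units.val_one,
    ← sub_eq_zero, RingHom.toMonoidHom_eq_coe, MonoidHom.coe_coe, ← map_one (toZModPow n),
    ← map_sub, ← RingHom.mem_ker, ker_toZModPow, Ideal.mem_span_singleton']
  exact exists_congr fun b =>
    ⟨fun h => by linear_combination -h, fun h => by linear_combination -h⟩

lemma one_add_p_mul_ne_zero (x : ℤ_[p]) : 1 + p * x ≠ 0 := fun h =>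
  p_nonunit (IsUnit.of_mul_eq_one (-x) (by linear_combination -h))

lemma eq_one_of_sq_eq_one {u : ℤ_[2]ˣ} (hu : u ∈ unitsCongrOne 2 2) (h : u ^ 2 = 1) :
    u = 1 := by
  obtain ⟨b, hb⟩ := mem_unitsCongrOne_iff.mp hu
  have hsq : (u : ℤ_[2]) ^ 2 = 1 := by
    rw [← Units.val_pow_eq_pow_val, h, Units.val_one]
  push_cast at hb
  have hfactor : ((u : ℤ_[2]) - 1) * (2 * (1 + (2 : ℕ) * b)) = 0 := by
    push_cast
    linear_combination hsq - ((u : ℤ_[2]) - 1) * hb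
  rcases mul_eq_zero.mp hfactor with h1 | h2
  · exact Units.ext (sub_eq_zero.mp h1)
  · exact absurd ((mul_eq_zero.mp h2).resolve_left two_ne_zero) (one_add_p_mul_ne_zero b)

end PadicInt

namespace Matrix.GeneralLinearGroup

variable {n R : Type*} [Fintype n] [DecidableEq n] [CommRing R]

lemma coe_scalar_eq_smul_one (u : Rˣ) : (scalar n u : Matrix n n R) = (u : R) • 1 := by
  rw [coe_scalar, Matrix.scalar_apply, smul_one_eq_diagonal]

lemma scalar_injective [Nonempty n] : Function.Injective (scalar n : Rˣ → GL n R) :=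
  fun _ _ h => Units.ext (Matrix.scalar_inj.mp (congrArg Units.val h))

lemma exists_eq_scalar_of_coe_eq_smul_one [Nonempty n] {z : GL n R} {c : R}
    (hz : (z : Matrix n n R) = c • 1) : ∃ u : Rˣ, (u : R) = c ∧ scalar n u = z := by
  have hcenter : z ∈ Subgroup.center (GL n R) :=
    mem_center_iff_val_mem_range_scalar.mpr ⟨c, by rw [hz, scalar_apply, smul_one_eq_diagonal]⟩
  rw [center_eq_range_scalar (n := n) (R := R)] at hcenter
  obtain ⟨u, rfl⟩ := hcenter
  refine ⟨u, (Matrix.scalar_inj (n := n)).mp ?_, rfl⟩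
  rw [← coe_scalar, hz, scalar_apply, smul_one_eq_diagonal]

lemma continuous_scalar [TopologicalSpace R] [IsTopologicalRing R] :
    Continuous (scalar n : Rˣ → GL n R) :=
  Units.continuous_map (by change Continuous fun a : R => Matrix.diagonal fun _ : n => a; fun_prop)

end Matrix.GeneralLinearGroup

instance Matrix.compactSpace {m n R : Type*} [TopologicalSpace R] [CompactSpace R] :
    CompactSpace (Matrix m n R) :=
  inferInstanceAs (CompactSpace (m → n → R))

local notation "U₄" => PadicInt.unitsCongrOne 2 2

lemma mem_unitsCongrOne_two_two {u : ℤ_[2]ˣ} : u ∈ U₄ ↔ ∃ b, (u : ℤ_[2]) = 1 + 4 * b := by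
  rw [PadicInt.mem_unitsCongrOne_iff]
  norm_num

lemma scalar_mem_Kprime {u : ℤ_[2]ˣ} (hu : u ∈ U₄) :
    GeneralLinearGroup.scalar (Fin 2) u ∈ Kprime :=
  ⟨1, GeneralLinearGroup.scalar (Fin 2) u, (one_mul _).symm, det_one, ⟨0, by simp⟩, u,
    GeneralLinearGroup.coe_scalar_eq_smul_one u, mem_unitsCongrOne_two_two.mp hu⟩

lemma exists_det_eq_sq_of_mem_Kprime {g : GL (Fin 2) ℤ_[2]} (hg : g ∈ Kprime) :
    ∃ u ∈ U₄, GeneralLinearGroup.det g = u ^ 2 := by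
  obtain ⟨s, z, rfl, hdet, -, c, hz, b, rfl⟩ := hg
  obtain ⟨u, hu, rfl⟩ := GeneralLinearGroup.exists_eq_scalar_of_coe_eq_smul_one hz
  refine ⟨u, mem_unitsCongrOne_two_two.mpr ⟨b, hu⟩, ?_⟩
  rw [map_mul, GeneralLinearGroup.det_scalar, Fintype.card_fin,
    show GeneralLinearGroup.det s = 1 from Units.ext hdet, one_mul]

lemma mem_KprimeCenter_iff {g : Kprime} :
    g ∈ KprimeCenter ↔ ∃ u ∈ U₄, GeneralLinearGroup.scalar (Fin 2) u = g := by
  rw [KprimeCenter, Subgroup.mem_comap, Subgroup.coe_subtype,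
    GeneralLinearGroup.center_eq_range_scalar]
  constructor
  · rintro ⟨v, hv⟩
    obtain ⟨s, z, hg, -, ⟨a, ha⟩, c, hz, b, rfl⟩ := g.2
    obtain ⟨u, hu, rfl⟩ := GeneralLinearGroup.exists_eq_scalar_of_coe_eq_smul_one hz
    have hs : GeneralLinearGroup.scalar (Fin 2) (v * u⁻¹) = s := by
      rw [map_mul, map_inv, hv, hg, mul_inv_cancel_right]
    have hvu : v * u⁻¹ ∈ U₄ := by
      refine mem_unitsCongrOne_two_two.mpr ⟨a 0 0, ?_⟩
      have h00 :=
        congrArg (fun g : GL (Fin 2) ℤ_[2] => (g : Matrix (Fin 2) (Fin 2) ℤ_[2]) 0 0) hs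
      simp only [GeneralLinearGroup.coe_scalar, Matrix.scalar_apply, Matrix.diagonal_apply_eq, ha,
        ← Matrix.diagonal_ofNat, Matrix.add_apply, Matrix.diagonal_mul, Matrix.one_apply_eq] at h00
      exact h00
    refine ⟨v, ?_, hv⟩
    simpa using mul_mem hvu (mem_unitsCongrOne_two_two.mpr ⟨b, hu⟩)
  · rintro ⟨u, -, hu⟩
    exact ⟨u, hu⟩

lemma exists_scalar_sq_of_mem_KprimeGamma {γ : Kprime} (hγ : γ ∈ KprimeGamma) :
    ∃ v ∈ U₄, GeneralLinearGroup.scalar (Fin 2) (v ^ 2) = γ := by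
  obtain ⟨z, hz, rfl⟩ := hγ
  obtain ⟨v, hv, hzv⟩ := mem_KprimeCenter_iff.mp hz
  exact ⟨v, hv, by rw [pow_two, map_mul, hzv, Subgroup.coe_mul]⟩

lemma exists_mem_KprimeCenter_mul_self_eq_scalar_det_inv (g : Kprime) :
    ∃ z ∈ KprimeCenter, ((z * z : Kprime) : GL (Fin 2) ℤ_[2]) =
      GeneralLinearGroup.scalar (Fin 2) (GeneralLinearGroup.det (g : GL (Fin 2) ℤ_[2]))⁻¹ := by
  obtain ⟨u, hu, hdet⟩ := exists_det_eq_sq_of_mem_Kprime g.2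
  refine ⟨⟨_, scalar_mem_Kprime (inv_mem hu)⟩, mem_KprimeCenter_iff.mpr ⟨u⁻¹, inv_mem hu, rfl⟩, ?_⟩
  rw [Subgroup.coe_mul, ← map_mul, hdet, ← mul_inv, pow_two]

noncomputable def detInvScalar : Kprime →* KprimeGamma :=
  (((GeneralLinearGroup.scalar (Fin 2)).comp
      (invMonoidHom.comp (GeneralLinearGroup.det.comp Kprime.subtype))).codRestrict Kprime
      fun g => by
        obtain ⟨z, -, hz⟩ := exists_mem_KprimeCenter_mul_self_eq_scalar_det_inv g
        exact hz ▸ (z * z).2).codRestrict KprimeGamma fun g => by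
    obtain ⟨z, hzC, hz⟩ := exists_mem_KprimeCenter_mul_self_eq_scalar_det_inv g
    exact ⟨z, hzC, Subtype.ext hz.symm⟩

lemma coe_detInvScalar (g : Kprime) : ((detInvScalar g : Kprime) : GL (Fin 2) ℤ_[2]) =
    GeneralLinearGroup.scalar (Fin 2) (GeneralLinearGroup.det (g : GL (Fin 2) ℤ_[2]))⁻¹ :=
  rfl

noncomputable def toQuotientProdGamma : Kprime →* (Kprime ⧸ KprimeCenter) × KprimeGamma :=
  (QuotientGroup.mk' KprimeCenter).prod detInvScalar

lemma toQuotientProdGamma_apply (g : Kprime) :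
    toQuotientProdGamma g = (QuotientGroup.mk g, detInvScalar g) :=
  rfl

lemma toQuotientProdGamma_injective : Function.Injective toQuotientProdGamma := by
  refine (injective_iff_map_eq_one _).mpr fun g hg => ?_
  obtain ⟨u, hu, hug⟩ := mem_KprimeCenter_iff.mp
    ((QuotientGroup.eq_one_iff g).mp (congrArg Prod.fst hg))
  have hdet : GeneralLinearGroup.det (g : GL (Fin 2) ℤ_[2]) = 1 := by
    have h :
        GeneralLinearGroup.scalar (Fin 2) (GeneralLinearGroup.det (g : GL (Fin 2) ℤ_[2]))⁻¹ =
        GeneralLinearGroup.scalar (Fin 2) 1 := by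
      rw [map_one, ← coe_detInvScalar]
      exact congrArg (fun x : KprimeGamma => ((x : Kprime) : GL (Fin 2) ℤ_[2]))
        (congrArg Prod.snd hg)
    exact inv_eq_one.mp (GeneralLinearGroup.scalar_injective h)
  rw [← hug, GeneralLinearGroup.det_scalar, Fintype.card_fin] at hdet
  rw [← Subtype.coe_inj, ← hug, PadicInt.eq_one_of_sq_eq_one hu hdet, map_one, Subgroup.coe_one]

lemma toQuotientProdGamma_surjective : Function.Surjective toQuotientProdGamma := by
  rintro ⟨q, γ⟩
  obtain ⟨g, rfl⟩ := QuotientGroup.mk'_surjective KprimeCenter q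
  obtain ⟨u, hu, hdet⟩ := exists_det_eq_sq_of_mem_Kprime g.2
  obtain ⟨v, hv, hvγ⟩ := exists_scalar_sq_of_mem_KprimeGamma γ.2
  -- `det (g w) = (u w)² = v⁻²`
  have hw : (u * v)⁻¹ ∈ U₄ := inv_mem (mul_mem hu hv)
  set w : Kprime := ⟨_, scalar_mem_Kprime hw⟩
  have hwC : w ∈ KprimeCenter := mem_KprimeCenter_iff.mpr ⟨_, hw, rfl⟩
  refine ⟨g * w, ?_⟩
  rw [toQuotientProdGamma_apply, Prod.mk.injEq]
  constructor
  · rw [QuotientGroup.mk_mul, (QuotientGroup.eq_one_iff w).mpr hwC, mul_one]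
    rfl
  · refine Subtype.ext (Subtype.ext ?_)
    rw [coe_detInvScalar, Subgroup.coe_mul, map_mul, hdet, GeneralLinearGroup.det_scalar,
      Fintype.card_fin, ← hvγ, inv_pow, mul_pow, mul_inv, inv_inv, inv_mul_cancel_left]

lemma continuous_detInvScalar : Continuous detInvScalar :=
  let hdet := GeneralLinearGroup.continuous_det.comp continuous_subtype_val
  ((GeneralLinearGroup.continuous_scalar.comp (continuous_inv.comp hdet)).subtype_mk _).subtype_mk _

lemma continuous_toQuotientProdGamma : Continuous toQuotientProdGamma :=
  QuotientGroup.continuous_mk.prodMk continuous_detInvScalar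

lemma isCompact_Kprime : IsCompact (Kprime : Set (GL (Fin 2) ℤ_[2])) := by
  let A : Set (GL (Fin 2) ℤ_[2]) :=
    {s | (s : Matrix (Fin 2) (Fin 2) ℤ_[2]).det = 1} ∩
      Units.val ⁻¹' Set.range fun a : Matrix (Fin 2) (Fin 2) ℤ_[2] => 1 + 4 * a
  let B : Set (GL (Fin 2) ℤ_[2]) :=
    Units.val ⁻¹' Set.range fun b : ℤ_[2] => (1 + 4 * b) • (1 : Matrix (Fin 2) (Fin 2) ℤ_[2])
  have hA : IsClosed A :=
    (isClosed_eq (by fun_prop) continuous_const).inter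
      ((isCompact_range (by fun_prop)).isClosed.preimage Units.continuous_val)
  have hB : IsClosed B := (isCompact_range (by fun_prop)).isClosed.preimage Units.continuous_val
  have hK : (Kprime : Set (GL (Fin 2) ℤ_[2])) = Set.image2 (· * ·) A B := by
    ext g
    constructor
    · rintro ⟨s, z, rfl, hdet, ⟨a, ha⟩, c, hz, b, rfl⟩
      exact ⟨s, ⟨hdet, a, ha.symm⟩, z, ⟨b, hz.symm⟩, rfl⟩
    · rintro ⟨s, ⟨hdet, a, ha⟩, z, ⟨b, hz⟩, rfl⟩
      exact ⟨s, z, rfl, hdet, ⟨a, ha.symm⟩, 1 + 4 * b, hz.symm, b, rfl⟩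
  rw [hK, ← Set.image_prod]
  exact (hA.isCompact.prod hB.isCompact).image continuous_mul

instance : CompactSpace Kprime := isCompact_iff_compactSpace.mp isCompact_Kprime

instance : IsClosed (KprimeCenter : Set Kprime) := by
  rw [KprimeCenter, Subgroup.coe_comap, Subgroup.coe_center, ← Set.centralizer_univ]
  exact (Set.isClosed_centralizer _).preimage continuous_subtype_val

/-- Let `K'` be the subgroup of `GL₂(ℤ₂)` of all products `g = s·z` with `s ∈ SL₂(ℤ₂)`,
`s ≡ I mod 4`, and `z` scalar with scalar in `1 + 4ℤ₂`.  Then the map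
`g ↦ (g·(K' ∩ Z), (det g)⁻¹)` is an isomorphism of topological groups
`K' ≅ (K'/(K' ∩ Z)) × Γ`, where `Z` is the center of `GL₂(ℚ₂)` and `Γ = (K' ∩ Z)²`. -/
theorem stmt_13 :
    ∃ e : Kprime ≃* (Kprime ⧸ KprimeCenter) × KprimeGamma,
      Continuous e ∧ Continuous e.symm ∧
      ∀ g : Kprime, (e g).1 = QuotientGroup.mk g ∧
        ((((e g).2 : Kprime) : GL (Fin 2) ℤ_[2]) : Matrix (Fin 2) (Fin 2) ℤ_[2]) =
          (((Matrix.GeneralLinearGroup.det ((g : GL (Fin 2) ℤ_[2])))⁻¹ : ℤ_[2]ˣ) : ℤ_[2]) •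
            (1 : Matrix (Fin 2) (Fin 2) ℤ_[2]) := by
  let e := MulEquiv.ofBijective toQuotientProdGamma
    ⟨toQuotientProdGamma_injective, toQuotientProdGamma_surjective⟩
  have he : Continuous e := continuous_toQuotientProdGamma
  refine ⟨e, he, (he.homeoOfEquivCompactToT2 (f := e.toEquiv)).symm.continuous, fun g => ⟨rfl, ?_⟩⟩
  exact GeneralLinearGroup.coe_scalar_eq_smul_one _
end

section
/- Let A be a commutative ring, I \subseteq A an ideal, and M a finitely generated A-module that is nearly faithful (i.e. Ann_A(M) is nilpotent). Then M/IM is a nearly faithful A/I-module provided that every minimal prime of A/I is the image of a minimal prime of A in the support of M; in particular if A acts nearly faithfully on M and Spec(A/I) is a union of irreducible components of Spec A, then A/I acts nearly faithfully on M/IM. -/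
/-!
Since `M` is finite, `Supp(M/IM) = Supp M ∩ V(I)`, so a prime containing both `I` and `Ann M`
also contains `Ann(M/IM)`. By hypothesis every minimal prime over `I` contains `Ann M`, hence
`Ann_A(M/IM)` lies in their intersection `√I`; pulled back along `A → A/I`, this is the claim.
-/

namespace Module

variable {R M : Type*} [CommRing R] [AddCommGroup M] [Module R M] [Module.Finite R M]

theorem annihilator_quotient_smul_top_le {I p : Ideal R} [p.IsPrime] (hI : I ≤ p)
    (hM : annihilator R M ≤ p) : annihilator R (M ⧸ I • (⊤ : Submodule R M)) ≤ p := by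
  have hsupp : (⟨p, ‹_›⟩ : PrimeSpectrum R) ∈ support R (M ⧸ I • (⊤ : Submodule R M)) := by
    rw [support_quotient]
    exact ⟨mem_support_iff_of_finite.mpr hM, hI⟩
  exact mem_support_iff_of_finite.mp hsupp

theorem annihilator_quotient_smul_top_le_radical {I : Ideal R}
    (hmin : ∀ p ∈ I.minimalPrimes, annihilator R M ≤ p) :
    annihilator R (M ⧸ I • (⊤ : Submodule R M)) ≤ I.radical := by
  rw [← Ideal.sInf_minimalPrimes]
  refine le_sInf fun p hp => ?_
  have : p.IsPrime := hp.1.1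
  exact annihilator_quotient_smul_top_le hp.1.2 (hmin p hp)

end Module

theorem Ideal.comap_mk_nilradical {R : Type*} [CommRing R] (I : Ideal R) :
    (nilradical (R ⧸ I)).comap (Ideal.Quotient.mk I) = I.radical := by
  rw [nilradical, Ideal.comap_radical]
  exact congrArg Ideal.radical Ideal.mk_ker

theorem stmt_17_general (A : Type) [CommRing A] (I : Ideal A)
    (M : Type) [AddCommGroup M] [Module A M] [Module.Finite A M]
    (hmin : ∀ p ∈ I.minimalPrimes, p ∈ minimalPrimes A ∧ Module.annihilator A M ≤ p) :
    Module.annihilator (A ⧸ I) (M ⧸ (I • (⊤ : Submodule A M))) ≤ nilradical (A ⧸ I) := by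
  rw [← Ideal.comap_le_comap_iff_of_surjective _ Ideal.Quotient.mk_surjective,
    Ideal.comap_mk_nilradical, ← Ideal.Quotient.algebraMap_eq, Module.comap_annihilator]
  exact Module.annihilator_quotient_smul_top_le_radical fun p hp => (hmin p hp).2

/-- Let `A` be a commutative ring, `I ⊆ A` an ideal, and `M` a finitely generated `A`-module
that is nearly faithful (i.e. `Ann_A(M)` is nilpotent, equivalently contained in the
nilradical).  Then `M/IM` is a nearly faithful `A/I`-module provided that every minimal
prime of `A/I` (i.e. every prime of `A` minimal over `I`) is the image of a minimal prime
of `A` lying in the support of `M`. -/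
theorem stmt_17 (A : Type) [CommRing A] (I : Ideal A)
    (M : Type) [AddCommGroup M] [Module A M] [Module.Finite A M]
    (hfaith : Module.annihilator A M ≤ nilradical A)
    (hmin : ∀ p ∈ I.minimalPrimes, p ∈ minimalPrimes A ∧ Module.annihilator A M ≤ p) :
    Module.annihilator (A ⧸ I) (M ⧸ (I • (⊤ : Submodule A M))) ≤ nilradical (A ⧸ I) :=
  stmt_17_general A I M hmin
end
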